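/- (Theorem 1, explicit form.) Suppose p_q = max_k p_k is attained at index q, let n ≥ 1 be an integer, let O be a Hermitian d×d matrix, and set ε = ‖ρ̄ − ρ‖₁. If (p_q + ε)ⁿ < 2 p_qⁿ, then tr(ρ̄ⁿ) > 0 and | tr(ρ̄ⁿ O)/tr(ρ̄ⁿ) − ⟨ψ_q, O ψ_q⟩ | ≤ 2 ‖O‖_∞ (Σ_{k≠q} p_kⁿ)/p_qⁿ + 4 ‖O‖_∞ ((p_q + ε)ⁿ − p_qⁿ) / (2 p_qⁿ − (p_q + ε)ⁿ). -/

import Mathlib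

open MeasureTheory Complex
open scoped BigOperators ComplexConjugate Real NormedSpace ComplexOrder

attribute [local instance] Matrix.frobeniusSeminormedAddCommGroup
  Matrix.frobeniusNormedAddCommGroup Matrix.frobeniusNormedSpace

noncomputable section

/-- The complex inner product on `ℂ^d`, conjugate-linear in the first argument. -/
def cinner {d : ℕ} (u v : Fin d → ℂ) : ℂ := ∑ i, conj (u i) * v i

/-- The rank-one matrix `|u⟩⟨v|`, acting as `w ↦ ⟨v, w⟩ u`. -/
def ketbra {d : ℕ} (u v : Fin d → ℂ) : Matrix (Fin d) (Fin d) ℂ :=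
  Matrix.of fun i j => u i * conj (v j)

/-- The density of the centered normal distribution `N(0, σ)`. -/
def gaussPDF (σ t : ℝ) : ℝ := (Real.sqrt (2 * π) * σ)⁻¹ * Real.exp (-(t ^ 2) / (2 * σ ^ 2))

/-- The time-evolved state `ψ(t) = exp(−i t H) ψ(0)`. -/
def evolve {d : ℕ} (H : Matrix (Fin d) (Fin d) ℂ) (ψ0 : Fin d → ℂ) (t : ℝ) : Fin d → ℂ :=
  (NormedSpace.exp ((-(Complex.I * (t : ℂ))) • H)).mulVec ψ0

/-- The time-evolved pure state `ρ(t) = |ψ(t)⟩⟨ψ(t)|`. -/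
def rhoT {d : ℕ} (H : Matrix (Fin d) (Fin d) ℂ) (ψ0 : Fin d → ℂ) (t : ℝ) :
    Matrix (Fin d) (Fin d) ℂ :=
  ketbra (evolve H ψ0 t) (evolve H ψ0 t)

/-- The Gaussian time-average `ρ̄ = ∫ G(t) ρ(t) dt` (a Bochner integral of the matrix-valued
function, with respect to the Frobenius norm topology on matrices). -/
def rhoBar {d : ℕ} (H : Matrix (Fin d) (Fin d) ℂ) (ψ0 : Fin d → ℂ) (σ : ℝ) :
    Matrix (Fin d) (Fin d) ℂ :=
  ∫ t : ℝ, gaussPDF σ t • rhoT H ψ0 t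

/-- The trace norm (sum of singular values) `‖A‖₁ = tr √(Aᴴ A)`. -/
def traceNorm {d : ℕ} (A : Matrix (Fin d) (Fin d) ℂ) : ℝ :=
  (((Matrix.posSemidef_conjTranspose_mul_self A).1.eigenvectorUnitary : Matrix (Fin d) (Fin d) ℂ) *
    Matrix.diagonal (fun i => ((√((Matrix.posSemidef_conjTranspose_mul_self A).1.eigenvalues i) : ℝ) : ℂ)) *
    (star (Matrix.posSemidef_conjTranspose_mul_self A).1.eigenvectorUnitary :
      Matrix (Fin d) (Fin d) ℂ)).trace.re

/-- The operator norm `‖A‖_∞` of a matrix acting on the Euclidean space `ℂ^d`. -/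
def opNorm {d : ℕ} (A : Matrix (Fin d) (Fin d) ℂ) : ℝ :=
  ‖Matrix.toEuclideanCLM (𝕜 := ℂ) A‖

/-! Since `ρ` is diagonal in the eigenbasis, `tr(ρⁿ) = Σ p_kⁿ` and `tr(ρⁿ O) = Σ p_kⁿ ⟨ψ_k, O ψ_k⟩`,
a weighted mean of the `⟨ψ_k, O ψ_k⟩` whose weight concentrates on `q` as `n` grows; this gives the
first error term. Replacing `ρ` by `ρ̄` moves both traces little: with `D = ρ̄ - ρ`, the telescoping
`ρ̄ᵐ⁺¹ - ρᵐ⁺¹ = (ρ̄ᵐ - ρᵐ) ρ̄ + ρᵐ D`, Hölder's inequality `|tr(D X)| ≤ ‖D‖₁ ‖X‖_∞` and the bounds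
`‖ρ‖_∞ ≤ p_q`, `‖D‖_∞ ≤ ‖D‖₁ = ε` give `|tr((ρ̄ⁿ - ρⁿ) X)| ≤ ((p_q + ε)ⁿ - p_qⁿ) ‖X‖_∞`. A
perturbation bound for quotients, with `|tr(ρ̄ⁿ)| ≥ 2 p_qⁿ - (p_q + ε)ⁿ`, gives the second term. -/

open WithLp (toLp)
open Matrix (toEuclideanCLM)
open scoped Matrix InnerProductSpace

section Matrices

variable {d : ℕ}

lemma cinner_eq_inner (u v : Fin d → ℂ) : cinner u v = ⟪toLp 2 u, toLp 2 v⟫_ℂ := by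
  simp [cinner, EuclideanSpace.inner_toLp_toLp, dotProduct, mul_comm]

lemma ketbra_mulVec (u v w : Fin d → ℂ) : ketbra u v *ᵥ w = cinner v w • u := by
  ext i
  simp only [ketbra, Matrix.mulVec, dotProduct, Matrix.of_apply, cinner, Pi.smul_apply,
    smul_eq_mul, Finset.sum_mul]
  exact Finset.sum_congr rfl fun j _ => by ring

lemma ketbra_mul_ketbra (u v w z : Fin d → ℂ) :
    ketbra u v * ketbra w z = cinner v w • ketbra u z := by
  ext i j
  simp only [ketbra, Matrix.mul_apply, Matrix.of_apply, cinner, Matrix.smul_apply, smul_eq_mul,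
    Finset.sum_mul]
  exact Finset.sum_congr rfl fun k _ => by ring

lemma trace_ketbra_mul (u v : Fin d → ℂ) (B : Matrix (Fin d) (Fin d) ℂ) :
    (ketbra u v * B).trace = cinner v (B *ᵥ u) := by
  simp only [Matrix.trace, Matrix.diag, Matrix.mul_apply, ketbra, Matrix.of_apply, cinner,
    Matrix.mulVec, dotProduct, Finset.mul_sum]
  rw [Finset.sum_comm]
  exact Finset.sum_congr rfl fun i _ => Finset.sum_congr rfl fun j _ => by ring

lemma Matrix.trace_eq_sum_inner_toEuclideanCLM (M : Matrix (Fin d) (Fin d) ℂ)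
    (b : OrthonormalBasis (Fin d) ℂ (EuclideanSpace ℂ (Fin d))) :
    M.trace = ∑ i, ⟪b i, toEuclideanCLM (𝕜 := ℂ) M (b i)⟫_ℂ := by
  have := LinearMap.trace_eq_sum_inner (Matrix.toEuclideanLin M) b
  rwa [Matrix.toEuclideanLin_eq_toLin_orthonormal,
    LinearMap.trace_eq_matrix_trace _ (EuclideanSpace.basisFun _ ℂ).toBasis,
    LinearMap.toMatrix_toLin] at this

lemma opNorm_nonneg (A : Matrix (Fin d) (Fin d) ℂ) : 0 ≤ opNorm A := norm_nonneg _

lemma opNorm_one_le : opNorm (1 : Matrix (Fin d) (Fin d) ℂ) ≤ 1 := by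
  rw [opNorm, map_one]
  exact ContinuousLinearMap.norm_id_le

lemma opNorm_add_le (A B : Matrix (Fin d) (Fin d) ℂ) :
    opNorm (A + B) ≤ opNorm A + opNorm B := by
  rw [opNorm, map_add]
  exact norm_add_le _ _

lemma opNorm_mul_le (A B : Matrix (Fin d) (Fin d) ℂ) :
    opNorm (A * B) ≤ opNorm A * opNorm B := by
  rw [opNorm, map_mul]
  exact norm_mul_le _ _

lemma opNorm_pow_le (A : Matrix (Fin d) (Fin d) ℂ) (n : ℕ) : opNorm (A ^ n) ≤ opNorm A ^ n := by
  induction n with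
  | zero => simpa using opNorm_one_le
  | succ m ih =>
    rw [pow_succ, pow_succ]
    exact (opNorm_mul_le _ _).trans (by gcongr; exact opNorm_nonneg _)

lemma norm_cinner_mulVec_le (A : Matrix (Fin d) (Fin d) ℂ) {v : Fin d → ℂ}
    (hv : cinner v v = 1) : ‖cinner v (A *ᵥ v)‖ ≤ opNorm A := by
  have hv1 : ‖toLp 2 v‖ = 1 := by
    rw [cinner_eq_inner, inner_self_eq_norm_sq_to_K] at hv
    norm_cast at hv
    exact (pow_eq_one_iff_of_nonneg (norm_nonneg _) two_ne_zero).1 (Complex.ofReal_eq_one.1 hv)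
  calc ‖cinner v (A *ᵥ v)‖ ≤ ‖toLp 2 v‖ * ‖toEuclideanCLM (𝕜 := ℂ) A (toLp 2 v)‖ := by
        rw [cinner_eq_inner, Matrix.toEuclideanCLM_toLp]
        exact norm_inner_le_norm _ _
    _ ≤ opNorm A := by
        simpa [opNorm, hv1] using (toEuclideanCLM (𝕜 := ℂ) A).le_opNorm (toLp 2 v)

/-- For the eigenbasis `bᵢ` of `Aᴴ A` diagonalising `traceNorm`, `‖A bᵢ‖ = √λᵢ` are the singular
values. -/
lemma traceNorm_eq_sum_norm (A : Matrix (Fin d) (Fin d) ℂ) :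
    traceNorm A = ∑ i, ‖toEuclideanCLM (𝕜 := ℂ) A
      ((Matrix.posSemidef_conjTranspose_mul_self A).1.eigenvectorBasis i)‖ := by
  set hA := Matrix.posSemidef_conjTranspose_mul_self A
  have hnorm (i : Fin d) :
      ‖toEuclideanCLM (𝕜 := ℂ) A (hA.1.eigenvectorBasis i)‖ = √(hA.1.eigenvalues i) := by
    set x := hA.1.eigenvectorBasis i
    have heig : toEuclideanCLM (𝕜 := ℂ) (Aᴴ * A) x = (hA.1.eigenvalues i : ℂ) • x := by
      rw [← WithLp.toLp_ofLp (p := 2) x, Matrix.toEuclideanCLM_toLp, hA.1.mulVec_eigenvectorBasis]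
      rfl
    have hsq : ‖toEuclideanCLM (𝕜 := ℂ) A x‖ ^ 2 = hA.1.eigenvalues i := by
      rw [norm_sq_eq_re_inner (𝕜 := ℂ), ← ContinuousLinearMap.adjoint_inner_right,
        ← ContinuousLinearMap.star_eq_adjoint, ← map_star, ← mul_apply_eq_comp, ← map_mul,
        Matrix.star_eq_conjTranspose, heig, inner_smul_right, inner_self_eq_norm_sq_to_K,
        hA.1.eigenvectorBasis.orthonormal.norm_eq_one]
      simp
    rw [← hsq, Real.sqrt_sq (norm_nonneg _)]
  rw [traceNorm, Matrix.trace_mul_comm, ← mul_assoc, Unitary.coe_star_mul_self, one_mul,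
    Matrix.trace_diagonal, Complex.re_sum]
  simp [hnorm]

lemma traceNorm_nonneg (A : Matrix (Fin d) (Fin d) ℂ) : 0 ≤ traceNorm A := by
  rw [traceNorm_eq_sum_norm]
  positivity

lemma norm_trace_mul_le (A B : Matrix (Fin d) (Fin d) ℂ) :
    ‖(A * B).trace‖ ≤ traceNorm A * opNorm B := by
  set b := (Matrix.posSemidef_conjTranspose_mul_self A).1.eigenvectorBasis
  rw [Matrix.trace_mul_comm, Matrix.trace_eq_sum_inner_toEuclideanCLM _ b, traceNorm_eq_sum_norm,
    Finset.sum_mul]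
  refine (norm_sum_le _ _).trans (Finset.sum_le_sum fun i _ => ?_)
  calc ‖⟪b i, toEuclideanCLM (𝕜 := ℂ) (B * A) (b i)⟫_ℂ‖
      ≤ ‖b i‖ * ‖toEuclideanCLM (𝕜 := ℂ) B (toEuclideanCLM (𝕜 := ℂ) A (b i))‖ := by
        rw [map_mul]
        exact norm_inner_le_norm _ _
    _ ≤ ‖toEuclideanCLM (𝕜 := ℂ) A (b i)‖ * opNorm B := by
        rw [b.orthonormal.norm_eq_one, one_mul, mul_comm]
        exact ContinuousLinearMap.le_opNorm _ _

lemma opNorm_le_traceNorm (A : Matrix (Fin d) (Fin d) ℂ) : opNorm A ≤ traceNorm A := by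
  set b := (Matrix.posSemidef_conjTranspose_mul_self A).1.eigenvectorBasis
  refine ContinuousLinearMap.opNorm_le_bound _ (traceNorm_nonneg A) fun x => ?_
  rw [traceNorm_eq_sum_norm, Finset.sum_mul]
  conv_lhs => rw [← b.sum_repr' x, map_sum]
  refine (norm_sum_le _ _).trans (Finset.sum_le_sum fun i _ => ?_)
  rw [map_smul, norm_smul, mul_comm]
  gcongr
  simpa [b.orthonormal.norm_eq_one] using norm_inner_le_norm (𝕜 := ℂ) (b i) x

lemma norm_trace_pow_sub_pow_mul_le {R S : Matrix (Fin d) (Fin d) ℂ} {a e : ℝ}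
    (hR : opNorm R ≤ a) (hSR : traceNorm (S - R) ≤ e) (n : ℕ) (X : Matrix (Fin d) (Fin d) ℂ) :
    ‖((S ^ n - R ^ n) * X).trace‖ ≤ ((a + e) ^ n - a ^ n) * opNorm X := by
  have ha : 0 ≤ a := (opNorm_nonneg R).trans hR
  have he : 0 ≤ e := (traceNorm_nonneg _).trans hSR
  have hS : opNorm S ≤ a + e := calc
    opNorm S ≤ opNorm R + opNorm (S - R) := by simpa using opNorm_add_le R (S - R)
    _ ≤ a + e := add_le_add hR ((opNorm_le_traceNorm _).trans hSR)
  induction n generalizing X with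
  | zero => simp
  | succ m ih =>
    -- the trace is cycled so that `S - R` stands first, where Hölder's inequality applies
    have hsplit : ((S ^ (m + 1) - R ^ (m + 1)) * X).trace
        = ((S ^ m - R ^ m) * (S * X)).trace + ((S - R) * (X * R ^ m)).trace := by
      rw [← mul_assoc (S - R), Matrix.trace_mul_comm _ (R ^ m), ← Matrix.trace_add, pow_succ,
        pow_succ]
      noncomm_ring
    have hSX : opNorm (S * X) ≤ (a + e) * opNorm X :=
      (opNorm_mul_le _ _).trans (mul_le_mul_of_nonneg_right hS (opNorm_nonneg X))
    have hXR : opNorm (X * R ^ m) ≤ opNorm X * a ^ m :=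
      (opNorm_mul_le _ _).trans (mul_le_mul_of_nonneg_left
        ((opNorm_pow_le R m).trans (pow_le_pow_left₀ (opNorm_nonneg R) hR m)) (opNorm_nonneg X))
    have hmono : a ^ m ≤ (a + e) ^ m := pow_le_pow_left₀ ha (by linarith) m
    rw [hsplit]
    calc _ ≤ ((a + e) ^ m - a ^ m) * opNorm (S * X) + traceNorm (S - R) * opNorm (X * R ^ m) :=
          (norm_add_le _ _).trans (add_le_add (ih _) (norm_trace_mul_le _ _))
      _ ≤ ((a + e) ^ m - a ^ m) * ((a + e) * opNorm X) + e * (opNorm X * a ^ m) :=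
          add_le_add (mul_le_mul_of_nonneg_left hSX (sub_nonneg.2 hmono))
            (mul_le_mul hSR hXR (opNorm_nonneg _) he)
      _ = ((a + e) ^ (m + 1) - a ^ (m + 1)) * opNorm X := by ring

section OrthonormalFamily

variable {ι : Type*} [DecidableEq ι] {ψ : ι → Fin d → ℂ}

lemma orthonormal_toLp (horth : ∀ j k, cinner (ψ j) (ψ k) = if j = k then 1 else 0) :
    Orthonormal ℂ fun k => toLp 2 (ψ k) :=
  orthonormal_iff_ite.2 fun j k => by rw [← cinner_eq_inner, horth]

variable [Fintype ι]

lemma sum_smul_ketbra_mul_sum_smul_ketbra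
    (horth : ∀ j k, cinner (ψ j) (ψ k) = if j = k then 1 else 0) (a b : ι → ℂ) :
    (∑ k, a k • ketbra (ψ k) (ψ k)) * (∑ k, b k • ketbra (ψ k) (ψ k))
      = ∑ k, (a k * b k) • ketbra (ψ k) (ψ k) := by
  simp_rw [Finset.sum_mul_sum, Matrix.smul_mul, Matrix.mul_smul, ketbra_mul_ketbra, horth,
    smul_smul]
  simp

lemma sum_smul_ketbra_pow (horth : ∀ j k, cinner (ψ j) (ψ k) = if j = k then 1 else 0)
    (a : ι → ℂ) {n : ℕ} (hn : 1 ≤ n) :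
    (∑ k, a k • ketbra (ψ k) (ψ k)) ^ n = ∑ k, a k ^ n • ketbra (ψ k) (ψ k) := by
  induction n, hn using Nat.le_induction with
  | base => simp
  | succ m _ ih => simp_rw [pow_succ, ih, sum_smul_ketbra_mul_sum_smul_ketbra horth]

lemma trace_sum_smul_ketbra_pow_mul (horth : ∀ j k, cinner (ψ j) (ψ k) = if j = k then 1 else 0)
    (a : ι → ℂ) {n : ℕ} (hn : 1 ≤ n) (X : Matrix (Fin d) (Fin d) ℂ) :
    ((∑ k, a k • ketbra (ψ k) (ψ k)) ^ n * X).trace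
      = ∑ k, a k ^ n * cinner (ψ k) (X *ᵥ ψ k) := by
  simp [sum_smul_ketbra_pow horth a hn, Finset.sum_mul, Matrix.trace_sum, trace_ketbra_mul]

lemma opNorm_sum_smul_ketbra_le (horth : ∀ j k, cinner (ψ j) (ψ k) = if j = k then 1 else 0)
    (a : ι → ℂ) {M : ℝ} (hM : 0 ≤ M) (ha : ∀ k, ‖a k‖ ≤ M) :
    opNorm (∑ k, a k • ketbra (ψ k) (ψ k)) ≤ M := by
  have hv := orthonormal_toLp horth
  refine ContinuousLinearMap.opNorm_le_bound _ hM fun x => ?_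
  have happly : toEuclideanCLM (𝕜 := ℂ) (∑ k, a k • ketbra (ψ k) (ψ k)) x
      = ∑ k, (a k * ⟪toLp 2 (ψ k), x⟫_ℂ) • toLp 2 (ψ k) := by
    rw [← WithLp.toLp_ofLp (p := 2) x, Matrix.toEuclideanCLM_toLp, Matrix.sum_mulVec]
    simp [Matrix.smul_mulVec, ketbra_mulVec, cinner_eq_inner, smul_smul]
  have hsq :
      ‖toEuclideanCLM (𝕜 := ℂ) (∑ k, a k • ketbra (ψ k) (ψ k)) x‖ ^ 2 ≤ (M * ‖x‖) ^ 2 := by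
    rw [happly, norm_sq_eq_re_inner (𝕜 := ℂ), hv.inner_sum]
    calc RCLike.re (∑ k, conj (a k * ⟪toLp 2 (ψ k), x⟫_ℂ) * (a k * ⟪toLp 2 (ψ k), x⟫_ℂ))
        = ∑ k, ‖a k‖ ^ 2 * ‖⟪toLp 2 (ψ k), x⟫_ℂ‖ ^ 2 := by
          simp_rw [Complex.conj_mul', ← Complex.ofReal_pow, ← Complex.ofReal_sum,
            RCLike.re_to_complex, Complex.ofReal_re, norm_mul, mul_pow]
      _ ≤ ∑ k, M ^ 2 * ‖⟪toLp 2 (ψ k), x⟫_ℂ‖ ^ 2 := by gcongr; exact ha _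
      _ ≤ (M * ‖x‖) ^ 2 := by
          rw [← Finset.mul_sum, mul_pow]
          exact mul_le_mul_of_nonneg_left (hv.sum_inner_products_le x) (by positivity)
  exact (pow_le_pow_iff_left₀ (norm_nonneg _) (by positivity) two_ne_zero).1 hsq

lemma norm_trace_pow_mul_sub_sum_le (horth : ∀ j k, cinner (ψ j) (ψ k) = if j = k then 1 else 0)
    {p : ι → ℝ} (hp : ∀ k, 0 ≤ p k) {a : ℝ} (ha : 0 ≤ a) (hpa : ∀ k, p k ≤ a)
    {S : Matrix (Fin d) (Fin d) ℂ} {ε : ℝ}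
    (hS : traceNorm (S - ∑ k, (p k : ℂ) • ketbra (ψ k) (ψ k)) ≤ ε) {n : ℕ} (hn : 1 ≤ n)
    (X : Matrix (Fin d) (Fin d) ℂ) :
    ‖(S ^ n * X).trace - ∑ k, ((p k ^ n : ℝ) : ℂ) * cinner (ψ k) (X *ᵥ ψ k)‖
      ≤ ((a + ε) ^ n - a ^ n) * opNorm X := by
  have hρ := opNorm_sum_smul_ketbra_le horth (fun k => (p k : ℂ)) ha fun k => by
    rw [Complex.norm_real, Real.norm_of_nonneg (hp k)]
    exact hpa k
  have := norm_trace_pow_sub_pow_mul_le hρ hS n X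
  push_cast
  rwa [Matrix.sub_mul, Matrix.trace_sub, trace_sum_smul_ketbra_pow_mul horth _ hn] at this

end OrthonormalFamily

end Matrices

lemma norm_div_sub_div_le {A B A' B' : ℂ} {M η δ : ℝ} (hB : B ≠ 0) (hAB : ‖A / B‖ ≤ M)
    (hA : ‖A' - A‖ ≤ M * η) (hB' : ‖B' - B‖ ≤ η) (hδ : 0 < δ) (hδB' : δ ≤ ‖B'‖) :
    ‖A' / B' - A / B‖ ≤ 2 * M * (η / δ) := by
  have hB'0 : B' ≠ 0 := norm_pos_iff.1 (hδ.trans_le hδB')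
  have hsplit : A' / B' - A / B = (A' - A) / B' + A / B * (B - B') / B' := by
    field_simp
    ring
  have hMη : 0 ≤ M * η := (norm_nonneg _).trans hA
  rw [hsplit]
  calc _ ≤ ‖A' - A‖ / ‖B'‖ + ‖A / B‖ * ‖B' - B‖ / ‖B'‖ := by
        simpa only [norm_div, norm_mul, norm_sub_rev B B']
          using norm_add_le ((A' - A) / B') (A / B * (B - B') / B')
    _ ≤ M * η / δ + M * η / δ :=
        add_le_add (div_le_div₀ hMη hA hδ hδB') (div_le_div₀ hMη
          (mul_le_mul hAB hB' (norm_nonneg _) ((norm_nonneg _).trans hAB)) hδ hδB')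
    _ = 2 * M * (η / δ) := by ring

section WeightedMean

variable {ι : Type*} {w : ι → ℝ} {m : ι → ℂ} {M : ℝ}

lemma norm_sum_ofReal_mul_le (s : Finset ι) (hw : ∀ k, 0 ≤ w k) (hm : ∀ k ∈ s, ‖m k‖ ≤ M) :
    ‖∑ k ∈ s, (w k : ℂ) * m k‖ ≤ M * ∑ k ∈ s, w k := by
  rw [Finset.mul_sum]
  refine (norm_sum_le _ _).trans (Finset.sum_le_sum fun k hk => ?_)
  rw [norm_mul, Complex.norm_real, Real.norm_of_nonneg (hw k), mul_comm]
  exact mul_le_mul_of_nonneg_right (hm k hk) (hw k)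

variable [Fintype ι] [DecidableEq ι]

lemma norm_weighted_mean_sub_le (hw : ∀ k, 0 ≤ w k) (hm : ∀ k, ‖m k‖ ≤ M) {q : ι}
    (hq : 0 < w q) :
    ‖(∑ k, (w k : ℂ) * m k) / (∑ k, w k : ℝ) - m q‖
      ≤ 2 * M * ((∑ k ∈ Finset.univ.erase q, w k) / w q) := by
  have hW : w q ≤ ∑ k, w k := Finset.single_le_sum (fun k _ => hw k) (Finset.mem_univ q)
  have hnum : (∑ k, (w k : ℂ) * m k) - (∑ k, w k : ℝ) * m q
      = ∑ k ∈ Finset.univ.erase q, (w k : ℂ) * (m k - m q) := by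
    rw [Complex.ofReal_sum, Finset.sum_mul, ← Finset.sum_sub_distrib,
      ← Finset.sum_erase_add _ _ (Finset.mem_univ q)]
    simp [mul_sub]
  have hm' : ∀ k ∈ Finset.univ.erase q, ‖m k - m q‖ ≤ 2 * M := fun k _ =>
    (norm_sub_le _ _).trans (by linarith [hm k, hm q])
  rw [div_sub' (by exact_mod_cast (hq.trans_le hW).ne'), norm_div, Complex.norm_real,
    Real.norm_of_nonneg (hq.le.trans hW), mul_comm _ (m q), mul_comm (m q), hnum]
  calc _ ≤ 2 * M * (∑ k ∈ Finset.univ.erase q, w k) / ∑ k, w k :=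
        div_le_div_of_nonneg_right (norm_sum_ofReal_mul_le _ hw hm') (hq.le.trans hW)
    _ ≤ 2 * M * (∑ k ∈ Finset.univ.erase q, w k) / w q :=
        div_le_div_of_nonneg_left (mul_nonneg (by linarith [norm_nonneg (m q), hm q])
          (Finset.sum_nonneg fun k _ => hw k)) hq hW
    _ = _ := mul_div_assoc _ _ _

lemma re_pos_and_norm_div_sub_le (hw : ∀ k, 0 ≤ w k) (hm : ∀ k, ‖m k‖ ≤ M) {q : ι} {η : ℝ}
    (hη : η < w q) {A' B' : ℂ} (hB' : ‖B' - (∑ k, w k : ℝ)‖ ≤ η)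
    (hA' : ‖A' - ∑ k, (w k : ℂ) * m k‖ ≤ M * η) :
    0 < B'.re ∧ ‖A' / B' - m q‖
      ≤ 2 * M * ((∑ k ∈ Finset.univ.erase q, w k) / w q) + 2 * M * (η / (w q - η)) := by
  have hW : w q ≤ ∑ k, w k := Finset.single_le_sum (fun k _ => hw k) (Finset.mem_univ q)
  have hq : 0 < w q := (norm_nonneg _).trans hB' |>.trans_lt hη
  have hre : w q - η ≤ B'.re := by
    have := (Complex.abs_re_le_norm _).trans hB'
    rw [Complex.sub_re, Complex.ofReal_re] at this
    linarith [(abs_le.1 this).1]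
  refine ⟨by linarith, ?_⟩
  set mean := (∑ k, (w k : ℂ) * m k) / (∑ k, w k : ℝ)
  have hmean : ‖mean‖ ≤ M := by
    rw [norm_div, Complex.norm_real, Real.norm_of_nonneg (hq.le.trans hW)]
    exact div_le_of_le_mul₀ (hq.le.trans hW) ((norm_nonneg _).trans (hm q))
      (norm_sum_ofReal_mul_le _ hw fun k _ => hm k)
  calc ‖A' / B' - m q‖ ≤ ‖mean - m q‖ + ‖A' / B' - mean‖ :=
        (norm_sub_le_norm_sub_add_norm_sub _ mean _).trans_eq (add_comm _ _)
    _ ≤ _ := add_le_add (norm_weighted_mean_sub_le hw hm hq)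
        (norm_div_sub_div_le (by exact_mod_cast (hq.trans_le hW).ne') hmean hA' hB'
          (by linarith) (hre.trans (Complex.re_le_norm B')))

end WeightedMean

theorem distillation_error_bound_general
    {d : ℕ}
    (H : Matrix (Fin d) (Fin d) ℂ)
    (ψ : Fin d → Fin d → ℂ)
    (horth : ∀ j k, cinner (ψ j) (ψ k) = if j = k then 1 else 0)
    (c : Fin d → ℂ) (ψ0 : Fin d → ℂ)
    (p : Fin d → ℝ) (hp : ∀ k, p k = ‖c k‖ ^ 2)
    (ρ : Matrix (Fin d) (Fin d) ℂ) (hρ : ρ = ∑ k, (p k : ℂ) • ketbra (ψ k) (ψ k))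
    (σ : ℝ)
    (q : Fin d) (hq : ∀ k, p k ≤ p q)
    (n : ℕ) (hn : 1 ≤ n)
    (O : Matrix (Fin d) (Fin d) ℂ)
    (ε : ℝ) (hε : ε = traceNorm (rhoBar H ψ0 σ - ρ))
    (hsmall : (p q + ε) ^ n < 2 * p q ^ n) :
    0 < ((rhoBar H ψ0 σ ^ n).trace).re ∧
    ‖(rhoBar H ψ0 σ ^ n * O).trace / (rhoBar H ψ0 σ ^ n).trace -
        cinner (ψ q) (O.mulVec (ψ q))‖ ≤
      2 * opNorm O * ((∑ k ∈ Finset.univ.erase q, p k ^ n) / p q ^ n) +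
        4 * opNorm O * (((p q + ε) ^ n - p q ^ n) / (2 * p q ^ n - (p q + ε) ^ n)) := by
  have hp0 (k : Fin d) : 0 ≤ p k := hp k ▸ sq_nonneg _
  have hgrow : p q ^ n ≤ (p q + ε) ^ n :=
    pow_le_pow_left₀ (hp0 q) (by linarith [hε ▸ traceNorm_nonneg _]) n
  have hpert := norm_trace_pow_mul_sub_sum_le horth hp0 (hp0 q) hq (hρ ▸ hε.ge) hn
  have hB : ‖(rhoBar H ψ0 σ ^ n).trace - (∑ k, p k ^ n : ℝ)‖ ≤ (p q + ε) ^ n - p q ^ n := by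
    simpa [horth] using (hpert 1).trans (mul_le_of_le_one_right (sub_nonneg.2 hgrow) opNorm_one_le)
  obtain ⟨hre, hdist⟩ := re_pos_and_norm_div_sub_le (fun k => pow_nonneg (hp0 k) n)
    (fun k => norm_cinner_mulVec_le O ((horth k k).trans (if_pos rfl))) (by linarith) hB
    ((hpert O).trans_eq (mul_comm _ _))
  refine ⟨hre, hdist.trans ?_⟩
  rw [show p q ^ n - ((p q + ε) ^ n - p q ^ n) = 2 * p q ^ n - (p q + ε) ^ n by ring]
  have hterm : 0 ≤ opNorm O * (((p q + ε) ^ n - p q ^ n) / (2 * p q ^ n - (p q + ε) ^ n)) :=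
    mul_nonneg (opNorm_nonneg O) (div_nonneg (sub_nonneg.2 hgrow) (by linarith))
  linarith

/-- Theorem 1, explicit form: with `ε = ‖ρ̄ − ρ‖₁` and `(p_q + ε)ⁿ < 2 p_qⁿ`,
`tr(ρ̄ⁿ) > 0` and the distilled estimate deviates from `⟨ψ_q, O ψ_q⟩` by at most
`2‖O‖_∞(Σ_{k≠q}p_kⁿ)/p_qⁿ + 4‖O‖_∞((p_q+ε)ⁿ−p_qⁿ)/(2p_qⁿ−(p_q+ε)ⁿ)`. -/
theorem distillation_error_bound
    {d : ℕ} (hd : 0 < d)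
    (H : Matrix (Fin d) (Fin d) ℂ) (hH : H.IsHermitian)
    (ψ : Fin d → Fin d → ℂ) (E : Fin d → ℝ)
    (horth : ∀ j k, cinner (ψ j) (ψ k) = if j = k then 1 else 0)
    (heig : ∀ k, H.mulVec (ψ k) = (E k : ℂ) • ψ k)
    (c : Fin d → ℂ) (ψ0 : Fin d → ℂ) (hψ0 : ψ0 = ∑ k, c k • ψ k)
    (hunit : cinner ψ0 ψ0 = 1)
    (p : Fin d → ℝ) (hp : ∀ k, p k = ‖c k‖ ^ 2)
    (ρ : Matrix (Fin d) (Fin d) ℂ) (hρ : ρ = ∑ k, (p k : ℂ) • ketbra (ψ k) (ψ k))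
    (σ : ℝ) (hσ : 0 < σ)
    (q : Fin d) (hq : ∀ k, p k ≤ p q)
    (n : ℕ) (hn : 1 ≤ n)
    (O : Matrix (Fin d) (Fin d) ℂ) (hO : O.IsHermitian)
    (ε : ℝ) (hε : ε = traceNorm (rhoBar H ψ0 σ - ρ))
    (hsmall : (p q + ε) ^ n < 2 * p q ^ n) :
    0 < ((rhoBar H ψ0 σ ^ n).trace).re ∧
    ‖(rhoBar H ψ0 σ ^ n * O).trace / (rhoBar H ψ0 σ ^ n).trace -
        cinner (ψ q) (O.mulVec (ψ q))‖ ≤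
      2 * opNorm O * ((∑ k ∈ Finset.univ.erase q, p k ^ n) / p q ^ n) +
        4 * opNorm O * (((p q + ε) ^ n - p q ^ n) / (2 * p q ^ n - (p q + ε) ^ n)) :=
  distillation_error_bound_general H ψ horth c ψ0 p hp ρ hρ σ q hq n hn O ε hε hsmall

end
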